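/- arXiv:1210.1021 — 8 statements merged into one kernel-verified Lean document; each statement's English description precedes it below -/
import Mathlib

section
/- For every function g : ℕ → ℝ and every matrix ρ ∈ Matrix (Fin (4n̄+4)) (Fin (4n̄+4)) ℂ, the Lyapunov increment satisfies Σ_{n=0}^{4n̄+3} g(n)·(Φ(ρ)(n,n) − ρ(n,n)) = Σ_{n=0}^{4n̄+3} [ d(n)·(g(n−1) − g(n)) + e(n)·(g(n+1) − g(n)) ]·ρ(n,n), where the term d(n)·(g(n−1) − g(n)) is read as 0 when n = 0 (consistent since d(0) = 0), and where e(4n̄+3) = 0 so g(4n̄+4) is irrelevant. -/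
open Matrix
open scoped ComplexOrder

noncomputable section

/-- α(n) = π·√((n+1)/(n̄+1)) -/
def alphaAng (nbar n : ℕ) : ℝ := Real.pi * Real.sqrt (((n : ℝ) + 1) / ((nbar : ℝ) + 1))

/-- β(n) = θ₂·√n/2 -/
def betaAng (θ₂ : ℝ) (n : ℕ) : ℝ := θ₂ * Real.sqrt (n : ℝ) / 2

/-- generic two-step recursive sequence with initial values 0, 1 -/
def seq2 (step : ℕ → ℝ → ℝ → ℝ) : ℕ → ℝ
  | 0 => 0
  | 1 => 1
  | (j+2) => step j (seq2 step (j+1)) (seq2 step j)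

def fLow (nbar : ℕ) (θ₂ η : ℝ) : ℕ → ℝ :=
  seq2 (fun j x y => x + η * (Real.sin (alphaAng nbar (nbar - (j+1)) / 2))^2 *
    (Real.cos (betaAng θ₂ (nbar - (j+1)) / 2))^2 * (x - y))

def fHigh (nbar : ℕ) (θ₂ η : ℝ) : ℕ → ℝ :=
  seq2 (fun j x y => x + η * (Real.sin (betaAng θ₂ (nbar + (j+1)) / 2))^2 * (x - y))

def fLyap (nbar : ℕ) (θ₂ η : ℝ) (n : ℕ) : ℝ :=
  if n ≤ nbar then fLow nbar θ₂ η (nbar - n) else fHigh nbar θ₂ η (n - nbar)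

def Mg (nbar : ℕ) (θ₂ : ℝ) : Matrix (Fin (4*nbar+4)) (Fin (4*nbar+4)) ℂ :=
  fun i j => if (i : ℕ) = (j : ℕ) + 1
    then Complex.ofReal ((Real.cos (betaAng θ₂ (j : ℕ) / 2))^2 * Real.sin (alphaAng nbar (j : ℕ)))
    else 0

def Me (nbar : ℕ) (θ₂ : ℝ) : Matrix (Fin (4*nbar+4)) (Fin (4*nbar+4)) ℂ :=
  fun i j => if i = j
    then Complex.ofReal ((Real.cos (alphaAng nbar (j : ℕ) / 2))^2 * Real.cos (betaAng θ₂ (j : ℕ))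
      - (Real.sin (alphaAng nbar (j : ℕ) / 2))^2)
    else 0

def Mm (nbar : ℕ) (θ₂ : ℝ) : Matrix (Fin (4*nbar+4)) (Fin (4*nbar+4)) ℂ :=
  fun i j => if (i : ℕ) + 1 = (j : ℕ)
    then Complex.ofReal (Real.sin (betaAng θ₂ (j : ℕ)) * Real.cos (alphaAng nbar (j : ℕ) / 2))
    else 0

def PhiK (nbar : ℕ) (θ₂ : ℝ) (ρ : Matrix (Fin (4*nbar+4)) (Fin (4*nbar+4)) ℂ) :
    Matrix (Fin (4*nbar+4)) (Fin (4*nbar+4)) ℂ :=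
  Mg nbar θ₂ * ρ * (Mg nbar θ₂)ᴴ + Me nbar θ₂ * ρ * (Me nbar θ₂)ᴴ + Mm nbar θ₂ * ρ * (Mm nbar θ₂)ᴴ

/-- Hypothesis (H) -/
def HypH (nbar : ℕ) (θ₂ : ℝ) : Prop :=
  ∀ n k : ℕ, 1 ≤ n → n ≤ 4*nbar+3 → θ₂ ≠ (k : ℝ) * Real.pi / Real.sqrt (n : ℝ)

def dCoef (nbar : ℕ) (θ₂ : ℝ) (n : ℕ) : ℝ :=
  (Real.sin (betaAng θ₂ n))^2 * (Real.cos (alphaAng nbar n / 2))^2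

def eCoef (nbar : ℕ) (θ₂ : ℝ) (n : ℕ) : ℝ :=
  (Real.sin (alphaAng nbar n))^2 * (Real.cos (betaAng θ₂ n / 2))^4

def qCoef (nbar : ℕ) (θ₂ η : ℝ) (n : ℕ) : ℝ :=
  if n < nbar then
    (Real.sin (alphaAng nbar n))^2 * (Real.cos (betaAng θ₂ n / 2))^4 *
      (η * (Real.sin (betaAng θ₂ n / 2))^2 - 1) * (fLyap nbar θ₂ η n - fLyap nbar θ₂ η (n+1))
  else if n = nbar then 0
  else
    (Real.sin (betaAng θ₂ n))^2 * (Real.cos (alphaAng nbar n / 2))^2 *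
      (η * (Real.sin (alphaAng nbar n / 2))^2 * (Real.cos (betaAng θ₂ n / 2))^2 - 1) *
      (fLyap nbar θ₂ η n - fLyap nbar θ₂ η (n-1))


section AuxLemmas

lemma sum_ite_val {N : ℕ} (G : Fin N → ℂ) (m : ℕ) :
    (∑ n : Fin N, if (n : ℕ) = m then G n else 0) = if h : m < N then G ⟨m, h⟩ else 0 := by
  split
  · next h =>
    rw [Finset.sum_eq_single ⟨m, h⟩]
    · simp
    · intro b _ hb
      rw [if_neg]
      intro hbm; exact hb (Fin.ext hbm)
    · simp
  · next h =>
    apply Finset.sum_eq_zero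
    intro n _
    rw [if_neg]
    intro hn
    exact h (hn ▸ n.isLt)

lemma sum_ite_val' {N : ℕ} (G : Fin N → ℂ) (m : ℕ) (hm : m ≤ N) :
    (∑ n : Fin N, if (n : ℕ) + 1 = m then G n else 0)
      = if h : 1 ≤ m then G ⟨m - 1, by omega⟩ else 0 := by
  split
  · next h =>
    rw [Finset.sum_eq_single ⟨m - 1, by omega⟩]
    · rw [if_pos (show m - 1 + 1 = m by omega)]
    · intro b _ hb
      rw [if_neg]
      intro hbm
      exact hb (Fin.ext (show (b:ℕ) = m - 1 by omega))
    · simp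
  · next h =>
    apply Finset.sum_eq_zero
    intro n _
    rw [if_neg]
    intro hc
    exact h (by omega)

lemma diag_kraus {N : ℕ} (c : Fin N → Fin N → Prop) [∀ i j, Decidable (c i j)]
    (f : Fin N → ℂ) (A : Matrix (Fin N) (Fin N) ℂ)
    (hA : ∀ i j, A i j = if c i j then f j else 0)
    (hc : ∀ i j k, c i j → c i k → j = k)
    (ρ : Matrix (Fin N) (Fin N) ℂ) (n : Fin N) :
    (A * ρ * Aᴴ) n n = ∑ j, if c n j then f j * star (f j) * ρ j j else 0 := by
  simp only [Matrix.mul_apply, Matrix.conjTranspose_apply, hA]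
  refine Finset.sum_congr rfl fun k _ => ?_
  by_cases hk : c n k
  · rw [if_pos hk, if_pos hk]
    rw [Finset.sum_eq_single k]
    · rw [if_pos hk]; ring
    · intro b _ hb
      rw [if_neg, zero_mul]
      intro hbb; exact hb (hc n b k hbb hk)
    · simp
  · simp [hk]

lemma key_trace (nbar n : ℕ) (θ₂ : ℝ) :
    ((Real.cos (alphaAng nbar n / 2))^2 * Real.cos (betaAng θ₂ n)
      - (Real.sin (alphaAng nbar n / 2))^2)^2
      = 1 - eCoef nbar θ₂ n - dCoef nbar θ₂ n := by
  have h1 := Real.sin_sq_add_cos_sq (alphaAng nbar n / 2)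
  have h2 := Real.sin_sq_add_cos_sq (betaAng θ₂ n / 2)
  have hs : Real.sin (alphaAng nbar n)
      = 2 * Real.sin (alphaAng nbar n / 2) * Real.cos (alphaAng nbar n / 2) := by
    rw [← Real.sin_two_mul]; congr 1; ring
  have hsb : Real.sin (betaAng θ₂ n)
      = 2 * Real.sin (betaAng θ₂ n / 2) * Real.cos (betaAng θ₂ n / 2) := by
    rw [← Real.sin_two_mul]; congr 1; ring
  have hcb : Real.cos (betaAng θ₂ n) = 2 * (Real.cos (betaAng θ₂ n / 2))^2 - 1 := by
    have h := Real.cos_two_mul (betaAng θ₂ n / 2)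
    rw [show 2*(betaAng θ₂ n/2) = betaAng θ₂ n from by ring] at h
    exact h
  rw [eCoef, dCoef, hs, hsb, hcb]
  set sa := Real.sin (alphaAng nbar n / 2)
  set ca := Real.cos (alphaAng nbar n / 2)
  set sb := Real.sin (betaAng θ₂ n / 2)
  set cb := Real.cos (betaAng θ₂ n / 2)
  linear_combination (sa^2 + 1 - ca^2 + 2*ca^2*(2*cb^4 - 2*cb^2 + 1)) * h1 + (4*ca^2*cb^2) * h2

lemma sin_alpha_top (nbar : ℕ) : Real.sin (alphaAng nbar (4*nbar+3)) = 0 := by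
  have hne : (nbar : ℝ) + 1 ≠ 0 := by positivity
  have h4 : (((4*nbar+3 : ℕ) : ℝ) + 1) / ((nbar : ℝ) + 1) = 4 := by
    push_cast; field_simp; ring
  have : alphaAng nbar (4*nbar+3) = 2 * Real.pi := by
    rw [alphaAng, h4, show (4:ℝ) = 2^2 by norm_num, Real.sqrt_sq (by norm_num : (0:ℝ) ≤ 2)]
    ring
  rw [this, Real.sin_two_pi]

lemma sin_beta_zero (θ₂ : ℝ) : Real.sin (betaAng θ₂ 0) = 0 := by
  simp [betaAng]

end AuxLemmas

/-- the Lyapunov increment identity for any weight function g. -/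
theorem lyapunov_increment (nbar : ℕ) (θ₂ : ℝ) (g : ℕ → ℝ)
    (ρ : Matrix (Fin (4*nbar+4)) (Fin (4*nbar+4)) ℂ) :
    ∑ n : Fin (4*nbar+4), (Complex.ofReal (g (n : ℕ))) * (PhiK nbar θ₂ ρ n n - ρ n n)
      = ∑ n : Fin (4*nbar+4),
          (Complex.ofReal (dCoef nbar θ₂ (n : ℕ) * (g ((n : ℕ) - 1) - g (n : ℕ))
            + eCoef nbar θ₂ (n : ℕ) * (g ((n : ℕ) + 1) - g (n : ℕ)))) * ρ n n := by
  classical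
  have hg : ∀ n : Fin (4*nbar+4), (Mg nbar θ₂ * ρ * (Mg nbar θ₂)ᴴ) n n
      = ∑ j : Fin (4*nbar+4), if (n:ℕ) = (j:ℕ) + 1 then
          Complex.ofReal ((Real.cos (betaAng θ₂ (j:ℕ) / 2))^2 * Real.sin (alphaAng nbar (j:ℕ)))
          * star (Complex.ofReal ((Real.cos (betaAng θ₂ (j:ℕ) / 2))^2
              * Real.sin (alphaAng nbar (j:ℕ)))) * ρ j j
        else 0 :=
    diag_kraus (fun i j => (i:ℕ) = (j:ℕ) + 1)
      (fun j => Complex.ofReal ((Real.cos (betaAng θ₂ (j:ℕ) / 2))^2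
        * Real.sin (alphaAng nbar (j:ℕ))))
      (Mg nbar θ₂) (fun i j => rfl) (fun i j k hj hk => Fin.ext (by omega)) ρ
  have he : ∀ n : Fin (4*nbar+4), (Me nbar θ₂ * ρ * (Me nbar θ₂)ᴴ) n n
      = ∑ j : Fin (4*nbar+4), if n = j then
          Complex.ofReal ((Real.cos (alphaAng nbar (j:ℕ) / 2))^2 * Real.cos (betaAng θ₂ (j:ℕ))
            - (Real.sin (alphaAng nbar (j:ℕ) / 2))^2)
          * star (Complex.ofReal ((Real.cos (alphaAng nbar (j:ℕ) / 2))^2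
              * Real.cos (betaAng θ₂ (j:ℕ)) - (Real.sin (alphaAng nbar (j:ℕ) / 2))^2)) * ρ j j
        else 0 :=
    diag_kraus (fun i j => i = j)
      (fun j => Complex.ofReal ((Real.cos (alphaAng nbar (j:ℕ) / 2))^2
        * Real.cos (betaAng θ₂ (j:ℕ)) - (Real.sin (alphaAng nbar (j:ℕ) / 2))^2))
      (Me nbar θ₂) (fun i j => rfl) (fun i j k hj hk => hj.symm.trans hk) ρ
  have hm : ∀ n : Fin (4*nbar+4), (Mm nbar θ₂ * ρ * (Mm nbar θ₂)ᴴ) n n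
      = ∑ j : Fin (4*nbar+4), if (n:ℕ) + 1 = (j:ℕ) then
          Complex.ofReal (Real.sin (betaAng θ₂ (j:ℕ)) * Real.cos (alphaAng nbar (j:ℕ) / 2))
          * star (Complex.ofReal (Real.sin (betaAng θ₂ (j:ℕ))
              * Real.cos (alphaAng nbar (j:ℕ) / 2))) * ρ j j
        else 0 :=
    diag_kraus (fun i j => (i:ℕ) + 1 = (j:ℕ))
      (fun j => Complex.ofReal (Real.sin (betaAng θ₂ (j:ℕ)) * Real.cos (alphaAng nbar (j:ℕ) / 2)))
      (Mm nbar θ₂) (fun i j => rfl) (fun i j k hj hk => Fin.ext (by omega)) ρ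
  have TG : ∑ n : Fin (4*nbar+4), (Complex.ofReal (g (n:ℕ)))
        * (∑ j : Fin (4*nbar+4), if (n:ℕ) = (j:ℕ) + 1 then
            Complex.ofReal ((Real.cos (betaAng θ₂ (j:ℕ) / 2))^2 * Real.sin (alphaAng nbar (j:ℕ)))
            * star (Complex.ofReal ((Real.cos (betaAng θ₂ (j:ℕ) / 2))^2
                * Real.sin (alphaAng nbar (j:ℕ)))) * ρ j j
          else 0)
      = ∑ j : Fin (4*nbar+4),
          Complex.ofReal (eCoef nbar θ₂ (j:ℕ) * g ((j:ℕ) + 1)) * ρ j j := by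
    simp_rw [Finset.mul_sum, mul_ite, mul_zero]
    rw [Finset.sum_comm]
    refine Finset.sum_congr rfl fun j _ => ?_
    rw [sum_ite_val (fun n : Fin (4*nbar+4) => (Complex.ofReal (g (n:ℕ)))
      * (Complex.ofReal ((Real.cos (betaAng θ₂ (j:ℕ) / 2))^2 * Real.sin (alphaAng nbar (j:ℕ)))
        * star (Complex.ofReal ((Real.cos (betaAng θ₂ (j:ℕ) / 2))^2
            * Real.sin (alphaAng nbar (j:ℕ)))) * ρ j j)) ((j:ℕ) + 1)]
    by_cases hj : (j:ℕ) + 1 < 4*nbar+4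
    · rw [dif_pos hj]
      have hE : eCoef nbar θ₂ (j:ℕ) * g ((j:ℕ) + 1)
          = g ((j:ℕ) + 1) * (((Real.cos (betaAng θ₂ (j:ℕ) / 2))^2 * Real.sin (alphaAng nbar (j:ℕ)))
            * ((Real.cos (betaAng θ₂ (j:ℕ) / 2))^2 * Real.sin (alphaAng nbar (j:ℕ)))) := by
        rw [eCoef]; ring
      rw [hE]
      simp only [Fin.val_mk, Complex.star_def, Complex.conj_ofReal]
      push_cast
      ring
    · rw [dif_neg hj]
      have hj3 : (j:ℕ) = 4*nbar+3 := by omega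
      rw [hj3]
      simp [eCoef, sin_alpha_top]
  have TM : ∑ n : Fin (4*nbar+4), (Complex.ofReal (g (n:ℕ)))
        * (∑ j : Fin (4*nbar+4), if (n:ℕ) + 1 = (j:ℕ) then
            Complex.ofReal (Real.sin (betaAng θ₂ (j:ℕ)) * Real.cos (alphaAng nbar (j:ℕ) / 2))
            * star (Complex.ofReal (Real.sin (betaAng θ₂ (j:ℕ))
                * Real.cos (alphaAng nbar (j:ℕ) / 2))) * ρ j j
          else 0)
      = ∑ j : Fin (4*nbar+4),
          Complex.ofReal (dCoef nbar θ₂ (j:ℕ) * g ((j:ℕ) - 1)) * ρ j j := by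
    simp_rw [Finset.mul_sum, mul_ite, mul_zero]
    rw [Finset.sum_comm]
    refine Finset.sum_congr rfl fun j _ => ?_
    rw [sum_ite_val' (fun n : Fin (4*nbar+4) => (Complex.ofReal (g (n:ℕ)))
      * (Complex.ofReal (Real.sin (betaAng θ₂ (j:ℕ)) * Real.cos (alphaAng nbar (j:ℕ) / 2))
        * star (Complex.ofReal (Real.sin (betaAng θ₂ (j:ℕ))
            * Real.cos (alphaAng nbar (j:ℕ) / 2))) * ρ j j)) ((j:ℕ)) (le_of_lt j.isLt)]
    by_cases hj : 1 ≤ (j:ℕ)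
    · rw [dif_pos hj]
      have hD : dCoef nbar θ₂ (j:ℕ) * g ((j:ℕ) - 1)
          = g ((j:ℕ) - 1) * ((Real.sin (betaAng θ₂ (j:ℕ)) * Real.cos (alphaAng nbar (j:ℕ) / 2))
            * (Real.sin (betaAng θ₂ (j:ℕ)) * Real.cos (alphaAng nbar (j:ℕ) / 2))) := by
        rw [dCoef]; ring
      rw [hD]
      simp only [Fin.val_mk, Complex.star_def, Complex.conj_ofReal]
      push_cast
      ring
    · rw [dif_neg hj]
      have hj0 : (j:ℕ) = 0 := by omega
      rw [hj0]
      simp [dCoef, sin_beta_zero]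
  calc ∑ n : Fin (4*nbar+4), (Complex.ofReal (g (n : ℕ))) * (PhiK nbar θ₂ ρ n n - ρ n n)
      = (∑ n : Fin (4*nbar+4), (Complex.ofReal (g (n:ℕ)))
            * (∑ j : Fin (4*nbar+4), if (n:ℕ) = (j:ℕ) + 1 then
                Complex.ofReal ((Real.cos (betaAng θ₂ (j:ℕ) / 2))^2
                  * Real.sin (alphaAng nbar (j:ℕ)))
                * star (Complex.ofReal ((Real.cos (betaAng θ₂ (j:ℕ) / 2))^2
                    * Real.sin (alphaAng nbar (j:ℕ)))) * ρ j j
              else 0))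
        + (∑ n : Fin (4*nbar+4), (Complex.ofReal (g (n:ℕ)))
            * (∑ j : Fin (4*nbar+4), if (n:ℕ) + 1 = (j:ℕ) then
                Complex.ofReal (Real.sin (betaAng θ₂ (j:ℕ)) * Real.cos (alphaAng nbar (j:ℕ) / 2))
                * star (Complex.ofReal (Real.sin (betaAng θ₂ (j:ℕ))
                    * Real.cos (alphaAng nbar (j:ℕ) / 2))) * ρ j j
              else 0))
        + (∑ n : Fin (4*nbar+4),
            Complex.ofReal ((((Real.cos (alphaAng nbar (n:ℕ) / 2))^2 * Real.cos (betaAng θ₂ (n:ℕ))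
              - (Real.sin (alphaAng nbar (n:ℕ) / 2))^2)^2 - 1) * g (n:ℕ)) * ρ n n) := by
        rw [← Finset.sum_add_distrib, ← Finset.sum_add_distrib]
        refine Finset.sum_congr rfl fun n _ => ?_
        rw [PhiK]
        simp only [Matrix.add_apply, hg, he, hm, Finset.sum_ite_eq, Finset.mem_univ, if_true,
          Complex.star_def, Complex.conj_ofReal]
        push_cast
        ring
    _ = ∑ n : Fin (4*nbar+4),
          (Complex.ofReal (dCoef nbar θ₂ (n : ℕ) * (g ((n : ℕ) - 1) - g (n : ℕ))
            + eCoef nbar θ₂ (n : ℕ) * (g ((n : ℕ) + 1) - g (n : ℕ)))) * ρ n n := by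
        rw [TG, TM, ← Finset.sum_add_distrib, ← Finset.sum_add_distrib]
        refine Finset.sum_congr rfl fun n _ => ?_
        have hkey := key_trace nbar (n:ℕ) θ₂
        have hr : eCoef nbar θ₂ (n:ℕ) * g ((n:ℕ) + 1) + dCoef nbar θ₂ (n:ℕ) * g ((n:ℕ) - 1)
            + (((Real.cos (alphaAng nbar (n:ℕ) / 2))^2 * Real.cos (betaAng θ₂ (n:ℕ))
              - (Real.sin (alphaAng nbar (n:ℕ) / 2))^2)^2 - 1) * g (n:ℕ)
            = dCoef nbar θ₂ (n : ℕ) * (g ((n : ℕ) - 1) - g (n : ℕ))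
              + eCoef nbar θ₂ (n : ℕ) * (g ((n : ℕ) + 1) - g (n : ℕ)) := by
          linear_combination g (n:ℕ) * hkey
        rw [← add_mul, ← add_mul, ← hr]
        push_cast
        ring
end
end

section
/- For every n ∈ {0, 1, …, 4n̄+3}, the Lyapunov increment coefficient of f equals q(n): d(n)·(f(n−1) − f(n)) + e(n)·(f(n+1) − f(n)) = q(n), where the term d(n)·(f(n−1) − f(n)) is read as 0 when n = 0 (consistent since d(0) = 0). -/
open Matrix
open scoped ComplexOrder

noncomputable section

lemma sin_half_sq (a : ℝ) : Real.sin a = 2 * Real.sin (a/2) * Real.cos (a/2) := by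
  have := Real.sin_two_mul (a/2)
  rwa [show 2*(a/2) = a by ring] at this

lemma key_trig (a b : ℝ) :
    (Real.sin b)^2 * (Real.cos (a/2))^2 * ((Real.sin (a/2))^2 * (Real.cos (b/2))^2)
      = (Real.sin a)^2 * (Real.cos (b/2))^4 * (Real.sin (b/2))^2 := by
  rw [sin_half_sq a, sin_half_sq b]; ring

lemma fLyap_low_rec (nbar : ℕ) (θ₂ η : ℝ) {n : ℕ} (h1 : 1 ≤ n) (h2 : n < nbar) :
    fLyap nbar θ₂ η (n-1) = fLyap nbar θ₂ η n
      + η * (Real.sin (alphaAng nbar n / 2))^2 * (Real.cos (betaAng θ₂ n / 2))^2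
        * (fLyap nbar θ₂ η n - fLyap nbar θ₂ η (n+1)) := by
  set j := nbar - n - 1 with hj
  have hn1 : nbar - (n-1) = j+2 := by omega
  have hn2 : nbar - n = j+1 := by omega
  have hn3 : nbar - (n+1) = j := by omega
  have hstep : nbar - (j+1) = n := by omega
  simp only [fLyap, if_pos (show n-1 ≤ nbar by omega), if_pos (le_of_lt h2),
    if_pos (show n+1 ≤ nbar by omega), hn1, hn2, hn3]
  simp only [fLow, seq2, hstep]

lemma fLyap_high_rec (nbar : ℕ) (θ₂ η : ℝ) {n : ℕ} (h : nbar < n) :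
    fLyap nbar θ₂ η (n+1) = fLyap nbar θ₂ η n
      + η * (Real.sin (betaAng θ₂ n / 2))^2
        * (fLyap nbar θ₂ η n - fLyap nbar θ₂ η (n-1)) := by
  set j := n - nbar - 1 with hj
  have h1 : n + 1 - nbar = j + 2 := by omega
  have h2 : n - nbar = j + 1 := by omega
  have h3 : nbar + (j+1) = n := by omega
  have hm : fLyap nbar θ₂ η (n-1) = fHigh nbar θ₂ η j := by
    rcases Nat.lt_or_ge nbar (n-1) with h' | h'
    · simp only [fLyap, if_neg (show ¬ n-1 ≤ nbar by omega)]
      congr 1; omega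
    · have hn1 : n - 1 = nbar := by omega
      have hj0 : j = 0 := by omega
      simp [fLyap, hn1, hj0, fHigh, fLow, seq2]
  rw [hm]
  simp only [fLyap, if_neg (show ¬ n+1 ≤ nbar by omega),
    if_neg (show ¬ n ≤ nbar by omega), h1, h2]
  simp only [fHigh, seq2, h3]

/-- the Lyapunov increment coefficient of f equals q(n)
(the term d(n)·(f(n−1)−f(n)) is 0 at n = 0 since ℕ-subtraction gives f(0−1) = f(0)
and d(0) = 0). -/
theorem increment_coefficient_eq_q (nbar : ℕ) (θ₂ η : ℝ) (hη0 : 0 < η) (hη1 : η < 1) :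
    ∀ n : ℕ, n ≤ 4*nbar+3 →
      dCoef nbar θ₂ n * (fLyap nbar θ₂ η (n - 1) - fLyap nbar θ₂ η n)
        + eCoef nbar θ₂ n * (fLyap nbar θ₂ η (n + 1) - fLyap nbar θ₂ η n)
      = qCoef nbar θ₂ η n := by
  intro n hn
  rcases lt_trichotomy n nbar with hlt | heq | hgt
  · rw [qCoef, if_pos hlt]
    rcases Nat.eq_zero_or_pos n with h0 | h1
    · subst h0
      have hb : betaAng θ₂ 0 = 0 := by simp [betaAng]
      simp only [dCoef, eCoef, hb, Real.sin_zero, Nat.zero_sub, zero_div]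
      ring
    · rw [fLyap_low_rec nbar θ₂ η h1 hlt]
      simp only [dCoef, eCoef]
      linear_combination (η * (fLyap nbar θ₂ η n - fLyap nbar θ₂ η (n+1))) *
        key_trig (alphaAng nbar n) (betaAng θ₂ n)
  · subst heq
    have hα : alphaAng n n = Real.pi := by
      rw [alphaAng, div_self (by positivity : ((n:ℝ)+1) ≠ 0), Real.sqrt_one, mul_one]
    rw [qCoef, if_neg (lt_irrefl n), if_pos rfl, dCoef, eCoef, hα, Real.cos_pi_div_two,
      Real.sin_pi]
    ring
  · rw [qCoef, if_neg (by omega : ¬ n < nbar), if_neg (by omega : n ≠ nbar)]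
    rw [fLyap_high_rec nbar θ₂ η hgt]
    simp only [dCoef, eCoef]
    linear_combination (-(η * (fLyap nbar θ₂ η n - fLyap nbar θ₂ η (n-1)))) *
      key_trig (alphaAng nbar n) (betaAng θ₂ n)
end
end

section
/- The target Fock state is a fixed point of the Kraus map: M_g|n̄⟩ = 0, M_m|n̄⟩ = 0 and M_e|n̄⟩ = −|n̄⟩, and consequently Φ(|n̄⟩⟨n̄|) = |n̄⟩⟨n̄|. -/
open Matrix
open scoped ComplexOrder

noncomputable section

/-! At the target level α(n̄) = π, so sin α(n̄) = 0 and cos(α(n̄)/2) = 0 annihilate the n̄-th columns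
of M_g and M_m, while M_e acts there as −sin²(π/2) = −1. Thus |n̄⟩ is an eigenvector of every
Kraus operator, and M|n̄⟩ = c|n̄⟩ gives M|n̄⟩⟨n̄|M† = |c|²|n̄⟩⟨n̄|, with |c|² summing to 1. -/

theorem Matrix.mul_single_mul_conjTranspose_of_mulVec_single {n α : Type*} [Fintype n]
    [DecidableEq n] [Semiring α] [StarRing α] {M : Matrix n n α} {a : n} {c : α}
    (h : M *ᵥ Pi.single a 1 = Pi.single a c) :
    M * single a a 1 * Mᴴ = single a a (c * star c) := by
  have hcol (i : n) : M i a = (Pi.single a c : n → α) i := by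
    simpa using congrFun h i
  have hleft : M * single a a 1 = single a a c := by
    ext i j
    by_cases hj : j = a
    · subst hj
      simp [hcol, single_apply, Pi.single_apply, eq_comm]
    · simp [hj, Ne.symm hj]
  ext i j
  rw [hleft]
  by_cases hi : i = a
  · subst hi
    by_cases hj : j = i
    · subst hj
      simp [hcol]
    · simp [hcol, hj, Ne.symm hj]
  · simp [hi, Ne.symm hi]

theorem alphaAng_self (nbar : ℕ) : alphaAng nbar nbar = Real.pi := by
  rw [alphaAng, div_self (by positivity), Real.sqrt_one, mul_one]

section TargetColumn

variable (nbar : ℕ) (θ₂ : ℝ) {a : Fin (4 * nbar + 4)}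

theorem Mg_mulVec_single_of_val_eq (ha : (a : ℕ) = nbar) : Mg nbar θ₂ *ᵥ Pi.single a 1 = 0 := by
  ext i
  simp [Mg, ha, alphaAng_self]

theorem Mm_mulVec_single_of_val_eq (ha : (a : ℕ) = nbar) : Mm nbar θ₂ *ᵥ Pi.single a 1 = 0 := by
  ext i
  simp [Mm, ha, alphaAng_self]

theorem Me_mulVec_single_of_val_eq (ha : (a : ℕ) = nbar) :
    Me nbar θ₂ *ᵥ Pi.single a 1 = Pi.single a (-1) := by
  ext i
  by_cases hi : i = a <;> simp [Me, ha, alphaAng_self, hi]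

end TargetColumn

/-- the target Fock state is a fixed point of the Kraus map:
M_g|n̄⟩ = 0, M_m|n̄⟩ = 0, M_e|n̄⟩ = −|n̄⟩, and Φ(|n̄⟩⟨n̄|) = |n̄⟩⟨n̄|. -/
theorem target_fixed_point (nbar : ℕ) (θ₂ : ℝ) :
    (Mg nbar θ₂).mulVec (Pi.single (⟨nbar, by omega⟩ : Fin (4*nbar+4)) 1) = 0 ∧
    (Mm nbar θ₂).mulVec (Pi.single (⟨nbar, by omega⟩ : Fin (4*nbar+4)) 1) = 0 ∧
    (Me nbar θ₂).mulVec (Pi.single (⟨nbar, by omega⟩ : Fin (4*nbar+4)) 1)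
      = -(Pi.single (⟨nbar, by omega⟩ : Fin (4*nbar+4)) 1) ∧
    PhiK nbar θ₂ (Matrix.single (⟨nbar, by omega⟩ : Fin (4*nbar+4)) ⟨nbar, by omega⟩ 1)
      = Matrix.single (⟨nbar, by omega⟩ : Fin (4*nbar+4)) ⟨nbar, by omega⟩ 1 := by
  have hg := Mg_mulVec_single_of_val_eq nbar θ₂ (a := ⟨nbar, by omega⟩) rfl
  have hm := Mm_mulVec_single_of_val_eq nbar θ₂ (a := ⟨nbar, by omega⟩) rfl
  have he := Me_mulVec_single_of_val_eq nbar θ₂ (a := ⟨nbar, by omega⟩) rfl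
  refine ⟨hg, hm, by rw [he, Pi.single_neg], ?_⟩
  rw [← Pi.single_zero] at hg hm
  rw [PhiK, mul_single_mul_conjTranspose_of_mulVec_single hg,
    mul_single_mul_conjTranspose_of_mulVec_single he,
    mul_single_mul_conjTranspose_of_mulVec_single hm]
  simp
end
end

section
/- For all natural numbers m and n, sin(π·√((n+1)/(m+1))) = 0 if and only if there exists k ∈ ℕ with n+1 = k²·(m+1). (This characterizes the photon numbers n at which the upward Kraus coefficient sin(α(n)) vanishes, yielding the invariant subspaces of the reservoir with trapping condition θ₁ = π/√(m+1); in particular it vanishes at n = 4m+3 and n = 9m+8.) -/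
/-- sin(π·√((n+1)/(m+1))) = 0 iff n+1 = k²·(m+1) for some k ∈ ℕ. -/
theorem sin_alpha_eq_zero_iff (m n : ℕ) :
    Real.sin (Real.pi * Real.sqrt (((n : ℝ) + 1) / ((m : ℝ) + 1))) = 0 ↔
      ∃ k : ℕ, n + 1 = k ^ 2 * (m + 1) := by
  have hm : (0:ℝ) < (m:ℝ) + 1 := by positivity
  constructor
  · intro h
    rw [Real.sin_eq_zero_iff] at h
    obtain ⟨j, hj⟩ := h
    have hpi : (Real.pi : ℝ) ≠ 0 := Real.pi_ne_zero
    rw [mul_comm] at hj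
    have hs : Real.sqrt (((n : ℝ) + 1) / ((m : ℝ) + 1)) = (j : ℝ) :=
      (mul_left_cancel₀ hpi hj).symm
    have hj0 : (0:ℝ) ≤ (j:ℝ) := hs ▸ Real.sqrt_nonneg _
    refine ⟨j.toNat, ?_⟩
    have hk : ((j.toNat : ℤ) : ℝ) = (j : ℝ) := by
      rw [Int.toNat_of_nonneg (by exact_mod_cast hj0)]
    have hx : ((n : ℝ) + 1) / ((m : ℝ) + 1) = (j.toNat : ℝ) ^ 2 := by
      have := Real.sq_sqrt (le_of_lt (by positivity : (0:ℝ) < ((n : ℝ) + 1) / ((m : ℝ) + 1)))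
      rw [← this, hs, ← hk]; push_cast; ring
    have : (n : ℝ) + 1 = (j.toNat : ℝ) ^ 2 * ((m : ℝ) + 1) := by
      field_simp at hx; linarith
    exact_mod_cast this
  · rintro ⟨k, hk⟩
    have hx : ((n : ℝ) + 1) / ((m : ℝ) + 1) = (k : ℝ) ^ 2 := by
      have : (n : ℝ) + 1 = (k : ℝ) ^ 2 * ((m : ℝ) + 1) := by exact_mod_cast hk
      rw [this]; field_simp
    rw [hx, Real.sqrt_sq (by positivity), mul_comm]
    exact Real.sin_nat_mul_pi k
end

section
/- For all natural numbers n̄ and n, cos((π/2)·√((n+1)/(n̄+1))) = 0 if and only if there exists l ∈ ℕ with n+1 = (2l+1)²·(n̄+1). (This characterizes the Fock states left invariant by the reservoir: for n with sin(β(n)) ≠ 0 and cos(β(n)/2) ≠ 0, the Fock state |n⟩ is a fixed point of the Kraus map exactly when n = (2l+1)²·(n̄+1) − 1 for some l ∈ ℕ.) -/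
/-- cos((π/2)·√((n+1)/(n̄+1))) = 0 iff n+1 = (2l+1)²·(n̄+1) for some l ∈ ℕ. -/
theorem cos_half_alpha_eq_zero_iff (nbar n : ℕ) :
    Real.cos ((Real.pi / 2) * Real.sqrt (((n : ℝ) + 1) / ((nbar : ℝ) + 1))) = 0 ↔
      ∃ l : ℕ, n + 1 = (2 * l + 1) ^ 2 * (nbar + 1) := by
  have hnb : (0:ℝ) < (nbar : ℝ) + 1 := by positivity
  have hx : (0:ℝ) < ((n : ℝ) + 1) / ((nbar : ℝ) + 1) := by positivity
  rw [Real.cos_eq_zero_iff]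
  constructor
  · rintro ⟨k, hk⟩
    have hpi := Real.pi_pos
    have hs : Real.sqrt (((n : ℝ) + 1) / ((nbar : ℝ) + 1)) = 2 * k + 1 := by
      have : (Real.pi / 2) * Real.sqrt (((n : ℝ) + 1) / ((nbar : ℝ) + 1))
          = (2 * k + 1) * (Real.pi / 2) := by rw [hk]; ring
      field_simp at this
      rcases mul_eq_mul_right_iff.1 (by linarith : Real.sqrt (((n : ℝ) + 1) / ((nbar : ℝ) + 1)) * Real.pi = (2 * k + 1) * Real.pi) with h | h
      · exact h
      · exact absurd h (ne_of_gt hpi)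
    have hknn : 0 ≤ k := by
      by_contra hneg
      push_neg at hneg
      have : (2 * (k:ℝ) + 1) ≤ -1 := by
        have hk1 : k ≤ -1 := by omega
        have : (k:ℝ) ≤ -1 := by exact_mod_cast hk1
        linarith
      have := Real.sqrt_nonneg (((n : ℝ) + 1) / ((nbar : ℝ) + 1))
      linarith [hs ▸ this]
    refine ⟨k.toNat, ?_⟩
    have hsq : ((n : ℝ) + 1) / ((nbar : ℝ) + 1) = (2 * k + 1) ^ 2 := by
      rw [← hs, Real.sq_sqrt hx.le]
    have : ((n : ℝ) + 1) = (2 * (k.toNat : ℝ) + 1) ^ 2 * ((nbar : ℝ) + 1) := by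
      have hknat : (k.toNat : ℝ) = (k:ℝ) := by exact_mod_cast Int.toNat_of_nonneg hknn
      rw [hknat]
      field_simp at hsq
      linarith [hsq]
    exact_mod_cast this
  · rintro ⟨l, hl⟩
    refine ⟨l, ?_⟩
    have : ((n : ℝ) + 1) = (2 * (l : ℝ) + 1) ^ 2 * ((nbar : ℝ) + 1) := by exact_mod_cast hl
    have hs : Real.sqrt (((n : ℝ) + 1) / ((nbar : ℝ) + 1)) = 2 * l + 1 := by
      rw [this, mul_div_assoc, div_self hnb.ne', mul_one]
      rw [Real.sqrt_sq (by positivity)]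
    rw [hs]
    push_cast
    ring
end

section
/- The diagonal dynamics of the Kraus map is given by the tridiagonal column-stochastic matrix A with entries d and e: for every ρ ∈ Matrix (Fin (4n̄+4)) (Fin (4n̄+4)) ℂ and every n ∈ {0,…,4n̄+3}, Φ(ρ)(n,n) = e(n−1)·ρ(n−1,n−1) + (1 − d(n) − e(n))·ρ(n,n) + d(n+1)·ρ(n+1,n+1), with the convention that the terms referring to levels −1 (when n = 0) and 4n̄+4 (when n = 4n̄+3) are omitted. -/
open Matrix
open scoped ComplexOrder

noncomputable section

/-- the diagonal dynamics of the Kraus map is the tridiagonal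
column-stochastic matrix with entries d and e. -/
theorem diagonal_dynamics (nbar : ℕ) (θ₂ : ℝ)
    (ρ : Matrix (Fin (4*nbar+4)) (Fin (4*nbar+4)) ℂ) (n : ℕ) (hn : n < 4*nbar+4) :
    PhiK nbar θ₂ ρ ⟨n, hn⟩ ⟨n, hn⟩
      = (if h : n = 0 then 0 else
          (Complex.ofReal (eCoef nbar θ₂ (n-1))) * ρ ⟨n-1, by omega⟩ ⟨n-1, by omega⟩)
        + (Complex.ofReal (1 - dCoef nbar θ₂ n - eCoef nbar θ₂ n)) * ρ ⟨n, hn⟩ ⟨n, hn⟩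
        + (if h : n + 1 < 4*nbar+4 then
            (Complex.ofReal (dCoef nbar θ₂ (n+1))) * ρ ⟨n+1, h⟩ ⟨n+1, h⟩ else 0) := by
  classical
  -- Me term
  have hMe : (Me nbar θ₂ * ρ * (Me nbar θ₂)ᴴ) ⟨n, hn⟩ ⟨n, hn⟩
      = (Complex.ofReal (((Real.cos (alphaAng nbar n / 2))^2 * Real.cos (betaAng θ₂ n)
          - (Real.sin (alphaAng nbar n / 2))^2)^2)) * ρ ⟨n, hn⟩ ⟨n, hn⟩ := by
    rw [Matrix.mul_apply]
    rw [Finset.sum_eq_single (⟨n, hn⟩ : Fin (4*nbar+4))]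
    · rw [Matrix.mul_apply, Finset.sum_eq_single (⟨n, hn⟩ : Fin (4*nbar+4))]
      · simp only [Me, Matrix.conjTranspose_apply, ite_true, eq_self_iff_true,
          Complex.star_def, Complex.conj_ofReal, ← Complex.ofReal_pow]
        push_cast
        ring
      · intro i _ hi
        simp [Me, Ne.symm hi]
      · simp
    · intro j _ hj
      simp [Me, Matrix.conjTranspose_apply, Ne.symm hj]
    · simp
  -- Mg term
  have hMg : (Mg nbar θ₂ * ρ * (Mg nbar θ₂)ᴴ) ⟨n, hn⟩ ⟨n, hn⟩
      = (if h : n = 0 then 0 else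
          (Complex.ofReal (eCoef nbar θ₂ (n-1))) * ρ ⟨n-1, by omega⟩ ⟨n-1, by omega⟩) := by
    rw [Matrix.mul_apply]
    by_cases h0 : n = 0
    · rw [dif_pos h0]
      apply Finset.sum_eq_zero
      intro j _
      have : ¬ ((n : ℕ) = (j : ℕ) + 1) := by omega
      simp [Mg, Matrix.conjTranspose_apply, this]
    · rw [dif_neg h0]
      have hn1 : n - 1 < 4*nbar+4 := by omega
      rw [Finset.sum_eq_single (⟨n-1, hn1⟩ : Fin (4*nbar+4))]
      · rw [Matrix.mul_apply, Finset.sum_eq_single (⟨n-1, hn1⟩ : Fin (4*nbar+4))]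
        · have hcond : (n : ℕ) = (n - 1) + 1 := by omega
          simp only [Mg, Matrix.conjTranspose_apply, if_pos hcond, Complex.star_def,
            Complex.conj_ofReal, eCoef]
          push_cast
          ring
        · intro i _ hi
          have : ¬ ((n : ℕ) = (i : ℕ) + 1) := by
            intro hc
            apply hi
            apply Fin.ext
            simp
            omega
          simp [Mg, this]
        · simp
      · intro j _ hj
        have : ¬ ((n : ℕ) = (j : ℕ) + 1) := by
          intro hc
          apply hj
          apply Fin.ext
          simp
          omega
        simp [Mg, Matrix.conjTranspose_apply, this]
      · simp
  -- Mm term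
  have hMm : (Mm nbar θ₂ * ρ * (Mm nbar θ₂)ᴴ) ⟨n, hn⟩ ⟨n, hn⟩
      = (if h : n + 1 < 4*nbar+4 then
            (Complex.ofReal (dCoef nbar θ₂ (n+1))) * ρ ⟨n+1, h⟩ ⟨n+1, h⟩ else 0) := by
    rw [Matrix.mul_apply]
    by_cases h1 : n + 1 < 4*nbar+4
    · rw [dif_pos h1]
      rw [Finset.sum_eq_single (⟨n+1, h1⟩ : Fin (4*nbar+4))]
      · rw [Matrix.mul_apply, Finset.sum_eq_single (⟨n+1, h1⟩ : Fin (4*nbar+4))]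
        · simp only [Mm, Matrix.conjTranspose_apply, ite_true, eq_self_iff_true,
            Complex.star_def, Complex.conj_ofReal, dCoef]
          push_cast
          ring
        · intro i _ hi
          have : ¬ ((n : ℕ) + 1 = (i : ℕ)) := by
            intro hc
            apply hi
            apply Fin.ext
            simp [← hc]
          simp [Mm, this]
        · simp
      · intro j _ hj
        have : ¬ ((n : ℕ) + 1 = (j : ℕ)) := by
          intro hc
          apply hj
          apply Fin.ext
          simp [← hc]
        simp [Mm, Matrix.conjTranspose_apply, this]
      · simp
    · rw [dif_neg h1]
      apply Finset.sum_eq_zero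
      intro j _
      have : ¬ ((n : ℕ) + 1 = (j : ℕ)) := by
        have := j.isLt
        omega
      simp [Mm, Matrix.conjTranspose_apply, this]
  -- trig identity
  have key : ((Real.cos (alphaAng nbar n / 2))^2 * Real.cos (betaAng θ₂ n)
        - (Real.sin (alphaAng nbar n / 2))^2)^2
      = 1 - dCoef nbar θ₂ n - eCoef nbar θ₂ n := by
    rw [dCoef, eCoef]
    obtain ⟨a, ha⟩ : ∃ a, alphaAng nbar n = 2 * a := ⟨alphaAng nbar n / 2, by ring⟩
    obtain ⟨b, hb⟩ : ∃ b, betaAng θ₂ n = 2 * b := ⟨betaAng θ₂ n / 2, by ring⟩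
    have ha2 : alphaAng nbar n / 2 = a := by rw [ha]; ring
    have hb2 : betaAng θ₂ n / 2 = b := by rw [hb]; ring
    rw [ha2, hb2, ha, hb, Real.sin_two_mul, Real.cos_two_mul', Real.sin_two_mul]
    have h1 : Real.sin a ^ 2 = 1 - Real.cos a ^ 2 := Real.sin_sq a
    have h2 : Real.sin b ^ 2 = 1 - Real.cos b ^ 2 := Real.sin_sq b
    set C := Real.cos a ^ 2
    set S := Real.sin a ^ 2
    set P := Real.sin b ^ 2
    set Q := Real.cos b ^ 2
    linear_combination (2 - 4*C*Q + 4*C*Q^2 + C*(P - 1 + Q) + (S - 1 + C)) * h1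
      + (2*C - 4*C^2*Q + 4*Q*C + C*(C*(P - 1 + Q) + (S - 1 + C))) * h2
  rw [PhiK]
  simp only [Matrix.add_apply]
  rw [hMe, hMg, hMm, key]
end
end

section
/- (Proposition 2, closed-form part.) Assume n̄ ≥ 1 and hypothesis (H'). Let Γ⁻, Γ⁺ ∈ ℝ and set b(n) = Γ⁻·n, c(n) = Γ⁺·n. Let x¹ be defined on {0,…,9n̄+7} by the recurrences x¹(n̄−1) = b(n̄)/e(n̄−1), x¹(n) = (d(n+1)/e(n))·x¹(n+1) for 0 ≤ n < n̄−1, x¹(n̄+1) = c(n̄)/d(n̄+1), x¹(n) = (e(n−1)/d(n))·x¹(n−1) for n̄+1 < n ≤ 9n̄+7. Then for 1 ≤ m ≤ n̄: x¹(n̄−m) = (b(n̄)/e(n̄−1))·∏_{l=2}^{m} d(n̄−l+1)/e(n̄−l), and for 1 ≤ m ≤ 8n̄+7: x¹(n̄+m) = (c(n̄)/d(n̄+1))·∏_{l=2}^{m} e(n̄+l−1)/d(n̄+l) (empty products equal 1). Consequently, if x¹(n̄) is chosen so that Σ_{n=0}^{9n̄+7} x¹(n) = 0, then −x¹(n̄)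 = (b(n̄)/e(n̄−1))·Σ_{m=1}^{n̄} ∏_{l=2}^{m} d(n̄−l+1)/e(n̄−l) + (c(n̄)/d(n̄+1))·Σ_{m=1}^{8n̄+7} ∏_{l=2}^{m} e(n̄+l−1)/d(n̄+l), which is the estimated loss of fidelity of the steady state to the target Fock state |n̄⟩ in presence of decoherence. -/
noncomputable section

/-- Extended nondegeneracy hypothesis (H'): θ₂ ≠ kπ/√n for 1 ≤ n ≤ 9n̄+7, k ∈ ℕ. -/
def HypH' (nbar : ℕ) (θ₂ : ℝ) : Prop :=
  ∀ n k : ℕ, 1 ≤ n → n ≤ 9*nbar+7 → θ₂ ≠ (k : ℝ) * Real.pi / Real.sqrt (n : ℝ)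

/-!
Both one-sided recurrences are first-order linear, so iterating them away from `n̄` writes `x¹`
as its first value times a product of the transfer ratios. Splitting the normalization
`Σ x¹(n) = 0` into `x¹(n̄)`, the part below `n̄` and the part above it then gives `-x¹(n̄)`.
-/

open Finset

theorem sum_Icc_one_eq_sum_range {M : Type*} [AddCommMonoid M] (f : ℕ → M) (n : ℕ) :
    ∑ m ∈ Icc 1 n, f m = ∑ i ∈ range n, f (i + 1) := by
  rw [← Ico_add_one_right_eq_Icc, sum_Ico_eq_sum_range, Nat.add_sub_cancel]
  simp only [add_comm]

theorem sum_range_eq_add_sum_Icc_sub_add_sum_Icc_add {M : Type*} [AddCommMonoid M]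
    (x : ℕ → M) (a b : ℕ) :
    ∑ n ∈ range (a + 1 + b), x n =
      x a + ∑ m ∈ Icc 1 a, x (a - m) + ∑ m ∈ Icc 1 b, x (a + m) := by
  rw [sum_range_add, sum_range_succ, ← sum_range_reflect, sum_Icc_one_eq_sum_range,
    sum_Icc_one_eq_sum_range]
  simp only [Nat.sub_sub, add_assoc, add_comm 1]
  abel

theorem eq_mul_prod_Icc_of_succ_eq_mul {M : Type*} [CommMonoid M] {y r : ℕ → M} {N : ℕ}
    (hstep : ∀ k, 1 ≤ k → k < N → y (k + 1) = r (k + 1) * y k) :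
    ∀ m, 1 ≤ m → m ≤ N → y m = y 1 * ∏ l ∈ Icc 2 m, r l := by
  intro m hm1 hmN
  induction m, hm1 using Nat.le_induction with
  | base => simp
  | succ m hm ih =>
    rw [hstep m hm (by omega), ih (by omega), prod_Icc_succ_top (by omega),
      mul_left_comm, mul_comm (r _)]

theorem perturbation_closed_form_general (nbar : ℕ) (θ₂ : ℝ)
    (Γm Γp : ℝ) (x1 : ℕ → ℝ)
    (h1 : x1 (nbar - 1) = Γm * nbar / eCoef nbar θ₂ (nbar - 1))
    (h2 : ∀ n : ℕ, n < nbar - 1 → x1 n = (dCoef nbar θ₂ (n+1) / eCoef nbar θ₂ n) * x1 (n+1))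
    (h3 : x1 (nbar + 1) = Γp * nbar / dCoef nbar θ₂ (nbar + 1))
    (h4 : ∀ n : ℕ, nbar + 1 < n → n ≤ 9*nbar+7 →
      x1 n = (eCoef nbar θ₂ (n-1) / dCoef nbar θ₂ n) * x1 (n-1)) :
    (∀ m : ℕ, 1 ≤ m → m ≤ nbar →
      x1 (nbar - m) = (Γm * nbar / eCoef nbar θ₂ (nbar - 1)) *
        ∏ l ∈ Finset.Icc 2 m, dCoef nbar θ₂ (nbar - l + 1) / eCoef nbar θ₂ (nbar - l)) ∧
    (∀ m : ℕ, 1 ≤ m → m ≤ 8*nbar+7 →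
      x1 (nbar + m) = (Γp * nbar / dCoef nbar θ₂ (nbar + 1)) *
        ∏ l ∈ Finset.Icc 2 m, eCoef nbar θ₂ (nbar + l - 1) / dCoef nbar θ₂ (nbar + l)) ∧
    ((∑ n ∈ Finset.range (9*nbar+8), x1 n) = 0 →
      -x1 nbar
        = (Γm * nbar / eCoef nbar θ₂ (nbar - 1)) *
            ∑ m ∈ Finset.Icc 1 nbar,
              ∏ l ∈ Finset.Icc 2 m, dCoef nbar θ₂ (nbar - l + 1) / eCoef nbar θ₂ (nbar - l)
          + (Γp * nbar / dCoef nbar θ₂ (nbar + 1)) *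
            ∑ m ∈ Finset.Icc 1 (8*nbar+7),
              ∏ l ∈ Finset.Icc 2 m, eCoef nbar θ₂ (nbar + l - 1) / dCoef nbar θ₂ (nbar + l)) := by
  have below : ∀ m, 1 ≤ m → m ≤ nbar →
      x1 (nbar - m) = (Γm * nbar / eCoef nbar θ₂ (nbar - 1)) *
        ∏ l ∈ Icc 2 m, dCoef nbar θ₂ (nbar - l + 1) / eCoef nbar θ₂ (nbar - l) := by
    rw [← h1]
    refine eq_mul_prod_Icc_of_succ_eq_mul (y := fun m ↦ x1 (nbar - m)) fun k hk hkN ↦ ?_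
    simpa [show nbar - (k + 1) + 1 = nbar - k by omega] using h2 (nbar - (k + 1)) (by omega)
  have above : ∀ m, 1 ≤ m → m ≤ 8 * nbar + 7 →
      x1 (nbar + m) = (Γp * nbar / dCoef nbar θ₂ (nbar + 1)) *
        ∏ l ∈ Icc 2 m, eCoef nbar θ₂ (nbar + l - 1) / dCoef nbar θ₂ (nbar + l) := by
    rw [← h3]
    refine eq_mul_prod_Icc_of_succ_eq_mul (y := fun m ↦ x1 (nbar + m)) fun k hk hkN ↦ ?_
    simpa [← add_assoc] using h4 (nbar + (k + 1)) (by omega) (by omega)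
  refine ⟨below, above, fun hsum ↦ ?_⟩
  rw [show 9 * nbar + 8 = nbar + 1 + (8 * nbar + 7) by ring,
    sum_range_eq_add_sum_Icc_sub_add_sum_Icc_add,
    sum_congr rfl fun m hm ↦ below m (mem_Icc.1 hm).1 (mem_Icc.1 hm).2,
    sum_congr rfl fun m hm ↦ above m (mem_Icc.1 hm).1 (mem_Icc.1 hm).2,
    ← mul_sum, ← mul_sum] at hsum
  linarith

/-- Proposition 2, closed-form part: closed-form products for x¹ and
the resulting estimated fidelity loss −x¹(n̄) under the normalization Σ x¹(n) = 0. -/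
theorem perturbation_closed_form (nbar : ℕ) (θ₂ : ℝ) (hnbar : 1 ≤ nbar)
    (hH : HypH' nbar θ₂) (Γm Γp : ℝ) (x1 : ℕ → ℝ)
    (h1 : x1 (nbar - 1) = Γm * nbar / eCoef nbar θ₂ (nbar - 1))
    (h2 : ∀ n : ℕ, n < nbar - 1 → x1 n = (dCoef nbar θ₂ (n+1) / eCoef nbar θ₂ n) * x1 (n+1))
    (h3 : x1 (nbar + 1) = Γp * nbar / dCoef nbar θ₂ (nbar + 1))
    (h4 : ∀ n : ℕ, nbar + 1 < n → n ≤ 9*nbar+7 →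
      x1 n = (eCoef nbar θ₂ (n-1) / dCoef nbar θ₂ n) * x1 (n-1)) :
    (∀ m : ℕ, 1 ≤ m → m ≤ nbar →
      x1 (nbar - m) = (Γm * nbar / eCoef nbar θ₂ (nbar - 1)) *
        ∏ l ∈ Finset.Icc 2 m, dCoef nbar θ₂ (nbar - l + 1) / eCoef nbar θ₂ (nbar - l)) ∧
    (∀ m : ℕ, 1 ≤ m → m ≤ 8*nbar+7 →
      x1 (nbar + m) = (Γp * nbar / dCoef nbar θ₂ (nbar + 1)) *
        ∏ l ∈ Finset.Icc 2 m, eCoef nbar θ₂ (nbar + l - 1) / dCoef nbar θ₂ (nbar + l)) ∧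
    ((∑ n ∈ Finset.range (9*nbar+8), x1 n) = 0 →
      -x1 nbar
        = (Γm * nbar / eCoef nbar θ₂ (nbar - 1)) *
            ∑ m ∈ Finset.Icc 1 nbar,
              ∏ l ∈ Finset.Icc 2 m, dCoef nbar θ₂ (nbar - l + 1) / eCoef nbar θ₂ (nbar - l)
          + (Γp * nbar / dCoef nbar θ₂ (nbar + 1)) *
            ∑ m ∈ Finset.Icc 1 (8*nbar+7),
              ∏ l ∈ Finset.Icc 2 m, eCoef nbar θ₂ (nbar + l - 1) / dCoef nbar θ₂ (nbar + l)) :=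
  perturbation_closed_form_general nbar θ₂ Γm Γp x1 h1 h2 h3 h4
end
end

section
/- (LaSalle remark.) Consider the Kraus map Φ on the (9n̄+9)-dimensional truncation, and assume θ₂·√n is not an integer multiple of π for any integer n with 1 ≤ n ≤ 9n̄+8 (i.e. sin(2β(n)) never vanishes there). Then for every density matrix ρ₀ ∈ Matrix (Fin (9n̄+9)) (Fin (9n̄+9)) ℂ, every entrywise accumulation point ρ∞ of the sequence of iterates (Φ^[k](ρ₀))_{k∈ℕ} is supported on the span of |n̄⟩ and |9n̄+8⟩: ρ∞(a,b) = 0 unless both a ∈ {n̄, 9n̄+8} and b ∈ {n̄, 9n̄+8}. -/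
open Matrix
open scoped ComplexOrder

noncomputable section

/-- Kraus operator M_g on the (9n̄+9)-dimensional truncation. -/
def Mg9 (nbar : ℕ) (θ₂ : ℝ) : Matrix (Fin (9*nbar+9)) (Fin (9*nbar+9)) ℂ :=
  fun i j => if (i : ℕ) = (j : ℕ) + 1
    then Complex.ofReal ((Real.cos (betaAng θ₂ (j : ℕ) / 2))^2 * Real.sin (alphaAng nbar (j : ℕ)))
    else 0

/-- Kraus operator M_e on the (9n̄+9)-dimensional truncation. -/
def Me9 (nbar : ℕ) (θ₂ : ℝ) : Matrix (Fin (9*nbar+9)) (Fin (9*nbar+9)) ℂ :=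
  fun i j => if i = j
    then Complex.ofReal ((Real.cos (alphaAng nbar (j : ℕ) / 2))^2 * Real.cos (betaAng θ₂ (j : ℕ))
      - (Real.sin (alphaAng nbar (j : ℕ) / 2))^2)
    else 0

/-- Kraus operator M_m on the (9n̄+9)-dimensional truncation. -/
def Mm9 (nbar : ℕ) (θ₂ : ℝ) : Matrix (Fin (9*nbar+9)) (Fin (9*nbar+9)) ℂ :=
  fun i j => if (i : ℕ) + 1 = (j : ℕ)
    then Complex.ofReal (Real.sin (betaAng θ₂ (j : ℕ)) * Real.cos (alphaAng nbar (j : ℕ) / 2))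
    else 0

/-- Kraus map on the (9n̄+9)-dimensional truncation. -/
def Phi9 (nbar : ℕ) (θ₂ : ℝ) (ρ : Matrix (Fin (9*nbar+9)) (Fin (9*nbar+9)) ℂ) :
    Matrix (Fin (9*nbar+9)) (Fin (9*nbar+9)) ℂ :=
  Mg9 nbar θ₂ * ρ * (Mg9 nbar θ₂)ᴴ + Me9 nbar θ₂ * ρ * (Me9 nbar θ₂)ᴴ
    + Mm9 nbar θ₂ * ρ * (Mm9 nbar θ₂)ᴴ

/-! Each Kraus operator has a single nonzero entry per row, so the populations `q n = ρ n n` evolve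
by themselves, `q ↦ P q` with `P i j = Σ_K |M_K i j|²`: a substochastic birth–death chain on
`{0, …, 9n̄+8}`. Moving up is blocked at `n̄` and `4n̄+3` (where `sin α = 0`) and moving down at
`n̄` and `9n̄+8` (where `cos (α/2) = 0`); the hypothesis on `θ₂`, which keeps `sin β` and
`cos (β/2)` nonzero, leaves every other move inside the truncation possible. So `n̄` and `9n̄+8`
are absorbing, every level up to `4n̄+3` drifts towards `n̄`, and every level above towards
`9n̄+8`, possibly falling back below `4n̄+3`. The distance to the absorbing level along these
drifts is a rank that one step raises by at most one and that some step of probability `≥ δ > 0`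
lowers; a weight `w` that is a concave function of the rank then satisfies `wᵀ P ≤ w - 1` off
`{n̄, 9n̄+8}`, so the populations there are summable in time and tend to `0`. Off-diagonal entries
of a limit point vanish by `|ρ a b|² ≤ ρ a a · ρ b b`. -/

open Filter Topology Finset

theorem tendsto_zero_of_add_le {V S : ℕ → ℝ} (hV : ∀ k, 0 ≤ V k) (hS : ∀ k, 0 ≤ S k)
    (h : ∀ k, V (k + 1) + S k ≤ V k) : Tendsto S atTop (𝓝 0) := by
  have hsum : ∀ n, ∑ k ∈ range n, S k + V n ≤ V 0 := by
    intro n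
    induction n with
    | zero => simp
    | succ n ih => rw [sum_range_succ]; linarith [h n]
  exact (summable_of_sum_range_le hS fun n => by linarith [hsum n, hV n]).tendsto_atTop_zero

theorem Finset.sum_ite_le_of_subsingleton {ι : Type*} {s : Finset ι} {p : ι → Prop}
    [DecidablePred p] {x : ℝ} (hp : ∀ i ∈ s, ∀ i' ∈ s, p i → p i' → i = i') (hx : 0 ≤ x) :
    ∑ i ∈ s, (if p i then x else 0) ≤ x := by
  rw [sum_ite, sum_const_zero, add_zero, sum_const, nsmul_eq_mul]
  refine mul_le_of_le_one_left hx ?_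
  exact_mod_cast card_le_one.2 fun i hi i' hi' =>
    hp i (mem_filter.1 hi).1 i' (mem_filter.1 hi').1 (mem_filter.1 hi).2 (mem_filter.1 hi').2

theorem Matrix.tendsto_dotProduct_zero_of_vecMul_add_le {ι : Type*} [Fintype ι]
    {P : Matrix ι ι ℝ} {w c : ι → ℝ} {q : ℕ → ι → ℝ} (hw : 0 ≤ w) (hc : 0 ≤ c)
    (hdrift : ∀ j, (w ᵥ* P) j + c j ≤ w j) (hq0 : ∀ k, 0 ≤ q k)
    (hq : ∀ k, q (k + 1) = P *ᵥ q k) :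
    Tendsto (fun k => c ⬝ᵥ q k) atTop (𝓝 0) := by
  refine tendsto_zero_of_add_le (V := fun k => w ⬝ᵥ q k)
    (fun k => dotProduct_nonneg_of_nonneg hw (hq0 k))
    (fun k => dotProduct_nonneg_of_nonneg hc (hq0 k)) fun k => ?_
  rw [hq, dotProduct_mulVec, ← add_dotProduct]
  exact dotProduct_le_dotProduct_of_nonneg_right (fun j => hdrift j) (hq0 k)

/-- `P i j` is the weight of the transition from `j` to `i`. -/
structure Matrix.IsDescentRank {ι : Type*} (P : Matrix ι ι ℝ) (h : ι → ℕ) : Prop where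
  le_succ : ∀ i j, P i j ≠ 0 → h i ≤ h j + 1
  absorbing : ∀ i j, P i j ≠ 0 → h j = 0 → h i = 0
  exists_descent : ∀ j, h j ≠ 0 → ∃ i, h i + 1 = h j ∧ 0 < P i j

/-- The increments shrink by the factor `M` as the rank grows, so with `M = 2 / δ` one step down
taken with probability `≥ δ` outweighs the step up that all the remaining probability can buy. -/
def descentWeight (M : ℝ) (K k : ℕ) : ℝ := ∑ m ∈ range k, M ^ (K - m)

section DescentWeight
variable {M : ℝ} {K : ℕ}

theorem descentWeight_nonneg (hM : 0 ≤ M) (k : ℕ) : 0 ≤ descentWeight M K k :=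
  sum_nonneg fun _ _ => pow_nonneg hM _

theorem descentWeight_mono (hM : 0 ≤ M) : Monotone (descentWeight M K) := fun _ _ hkl =>
  sum_le_sum_of_subset_of_nonneg (range_subset_range.2 hkl) fun _ _ _ => pow_nonneg hM _

theorem descentWeight_succ (k : ℕ) :
    descentWeight M K (k + 1) = descentWeight M K k + M ^ (K - k) :=
  sum_range_succ _ _

end DescentWeight

namespace Matrix.IsDescentRank
variable {ι : Type*} [Fintype ι] {P : Matrix ι ι ℝ} {h : ι → ℕ}

theorem exists_uniform_descent (hP : IsDescentRank P h) :
    ∃ δ > 0, ∀ j, h j ≠ 0 → ∃ i, h i + 1 = h j ∧ δ ≤ P i j := by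
  have hev : ∀ j, ∀ᶠ δ in 𝓝[>] (0 : ℝ), h j ≠ 0 → ∃ i, h i + 1 = h j ∧ δ ≤ P i j := by
    intro j
    by_cases hj : h j = 0
    · exact Eventually.of_forall fun _ hj' => absurd hj hj'
    obtain ⟨i, hi, hpos⟩ := hP.exists_descent j hj
    exact ((eventually_le_nhds hpos).filter_mono nhdsWithin_le_nhds).mono fun _ hδ _ => ⟨i, hi, hδ⟩
  obtain ⟨δ, hδ, hpos⟩ := ((eventually_all.2 hev).and self_mem_nhdsWithin).exists
  exact ⟨δ, hpos, hδ⟩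

theorem vecMul_descentWeight_of_eq_zero (hP : IsDescentRank P h) (M : ℝ) (K : ℕ) {j : ι}
    (hj : h j = 0) : ((fun i => descentWeight M K (h i)) ᵥ* P) j = 0 := by
  simp only [vecMul, dotProduct]
  refine sum_eq_zero fun i _ => ?_
  by_cases hij : P i j = 0
  · rw [hij, mul_zero]
  · rw [hP.absorbing i j hij hj, descentWeight, range_zero, sum_empty, zero_mul]

theorem vecMul_descentWeight_add_one_le (hP : IsDescentRank P h) (hnonneg : ∀ i j, 0 ≤ P i j)
    (hcol : ∀ j, ∑ i, P i j ≤ 1) {δ : ℝ} (hδ : 0 < δ)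
    (hdesc : ∀ j, h j ≠ 0 → ∃ i, h i + 1 = h j ∧ δ ≤ P i j) {K : ℕ} (hK : ∀ j, h j ≤ K)
    {j : ι} (hj : h j ≠ 0) :
    ((fun i => descentWeight (2 / δ) K (h i)) ᵥ* P) j + 1 ≤ descentWeight (2 / δ) K (h j) := by
  have hM : 0 ≤ 2 / δ := by positivity
  obtain ⟨i₀, hi₀, hδi₀⟩ := hdesc j hj
  obtain ⟨k, hk⟩ : ∃ k, h i₀ = k := ⟨_, rfl⟩
  have hkK : k + 1 ≤ K := hk ▸ hi₀ ▸ hK j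
  simp only [vecMul, dotProduct]
  rw [← hi₀, hk]
  have hF1 : descentWeight (2 / δ) K (k + 1)
      = descentWeight (2 / δ) K k + 2 / δ * (2 / δ) ^ (K - (k + 1)) := by
    rw [descentWeight_succ, ← pow_succ', Nat.sub_add_eq, Nat.sub_add_cancel (by omega)]
  have hF2 := descentWeight_succ (M := 2 / δ) (K := K) (k + 1)
  set F := descentWeight (2 / δ) K
  set b := (2 / δ) ^ (K - (k + 1))
  have hδ1 : δ ≤ 1 :=
    hδi₀.trans ((single_le_sum (fun i _ => hnonneg i j) (mem_univ i₀)).trans (hcol j))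
  have hb : 1 ≤ b := one_le_pow₀ ((one_le_div hδ).2 (by linarith))
  have hgap : ∀ i, 0 ≤ (F (k + 2) - F (h i)) * P i j := fun i => by
    by_cases hij : P i j = 0
    · rw [hij, mul_zero]
    · refine mul_nonneg (sub_nonneg.2 (descentWeight_mono hM ?_)) (hnonneg i j)
      have := hP.le_succ i j hij; omega
  have hsplit : ∑ i, F (h i) * P i j
      = F (k + 2) * ∑ i, P i j - ∑ i, (F (k + 2) - F (h i)) * P i j := by
    rw [mul_sum, ← sum_sub_distrib]; congr 1; ext i; ring
  have hi₀gap : (F (k + 2) - F k) * P i₀ j ≤ ∑ i, (F (k + 2) - F (h i)) * P i j :=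
    hk ▸ single_le_sum (fun i _ => hgap i) (mem_univ i₀)
  have hcolF : F (k + 2) * ∑ i, P i j ≤ F (k + 2) :=
    mul_le_of_le_one_right (descentWeight_nonneg hM _) (hcol j)
  have hdrop : δ * b + 2 * b ≤ (F (k + 2) - F k) * P i₀ j := by
    calc δ * b + 2 * b = (F (k + 2) - F k) * δ := by rw [hF2, hF1]; field_simp; ring
      _ ≤ (F (k + 2) - F k) * P i₀ j :=
        mul_le_mul_of_nonneg_left hδi₀ (sub_nonneg.2 (descentWeight_mono hM (by omega)))
  rw [hsplit]
  linarith [mul_pos hδ (zero_lt_one.trans_le hb)]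

theorem tendsto_zero (hP : IsDescentRank P h) (hnonneg : ∀ i j, 0 ≤ P i j)
    (hcol : ∀ j, ∑ i, P i j ≤ 1) {q : ℕ → ι → ℝ} (hq0 : 0 ≤ q 0)
    (hq : ∀ k, q (k + 1) = P *ᵥ q k) {j : ι} (hj : h j ≠ 0) :
    Tendsto (fun k => q k j) atTop (𝓝 0) := by
  obtain ⟨δ, hδ, hdesc⟩ := hP.exists_uniform_descent
  have hqk : ∀ k, 0 ≤ q k := fun k => by
    induction k with
    | zero => exact hq0
    | succ k ih => rw [hq]; exact fun i => sum_nonneg fun l _ => mul_nonneg (hnonneg i l) (ih l)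
  set c : ι → ℝ := fun i => if h i = 0 then 0 else 1
  have hc : 0 ≤ c := fun i => by dsimp [c]; split_ifs <;> norm_num
  have hdrift : ∀ i, ((fun i => descentWeight (2 / δ) (univ.sup h) (h i)) ᵥ* P) i + c i
      ≤ descentWeight (2 / δ) (univ.sup h) (h i) := fun i => by
    by_cases hi : h i = 0
    · rw [hP.vecMul_descentWeight_of_eq_zero _ _ hi]; simp [c, hi, descentWeight]
    · simpa [c, hi] using hP.vecMul_descentWeight_add_one_le hnonneg hcol hδ hdesc
        (fun i => le_sup (mem_univ i)) hi
  have hlim := tendsto_dotProduct_zero_of_vecMul_add_le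
    (fun i => descentWeight_nonneg (by positivity) (h i)) hc hdrift hqk hq
  refine squeeze_zero (fun k => hqk k j) (fun k => ?_) hlim
  calc q k j = c j * q k j := by simp [c, hj]
    _ ≤ c ⬝ᵥ q k := single_le_sum (f := fun i => c i * q k i)
        (fun i _ => mul_nonneg (hc i) (hqk k i)) (mem_univ j)

end Matrix.IsDescentRank

theorem Matrix.mul_mul_conjTranspose_apply_self {ι : Type*} [Fintype ι] (M ρ : Matrix ι ι ℂ)
    (i : ι) (hM : ∀ j k, M i j ≠ 0 → M i k ≠ 0 → j = k) :
    (M * ρ * Mᴴ) i i = ∑ j, (Complex.normSq (M i j) : ℂ) * ρ j j := by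
  simp only [mul_apply, conjTranspose_apply, sum_mul]
  rw [sum_comm]
  refine sum_congr rfl fun j _ => ?_
  rw [sum_eq_single j]
  · rw [Complex.normSq_eq_conj_mul_self, Complex.star_def]; ring
  · intro k _ hkj
    by_cases hj : M i j = 0
    · simp [hj]
    · have hk : M i k = 0 := by_contra fun hk => hkj (hM k j hk hj)
      simp [hk]
  · simp

theorem Matrix.PosSemidef.normSq_apply_le {ι : Type*} [Fintype ι] {A : Matrix ι ι ℂ}
    (hA : A.PosSemidef) (a b : ι) : Complex.normSq (A a b) ≤ (A a a).re * (A b b).re := by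
  have hdet := (hA.submatrix ![a, b]).det_nonneg
  rw [det_fin_two] at hdet
  have hba : A b a = star (A a b) := by rw [← conjTranspose_apply, hA.isHermitian.eq]
  have haa : (A a a).im = 0 := Complex.conj_eq_iff_im.1 (hA.isHermitian.apply a a)
  have hbb : (A b b).im = 0 := Complex.conj_eq_iff_im.1 (hA.isHermitian.apply b b)
  have := (Complex.nonneg_iff.1 hdet).1
  simp [hba, Complex.mul_re, haa, hbb, Complex.normSq_apply] at this ⊢
  linarith

theorem Matrix.PosSemidef.normSq_apply_le_of_tendsto {ι α : Type*} [Fintype ι] {l : Filter α}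
    [l.NeBot] {A : α → Matrix ι ι ℂ} {L : Matrix ι ι ℂ} (hA : ∀ k, (A k).PosSemidef)
    (hL : ∀ a b, Tendsto (fun k => A k a b) l (𝓝 (L a b))) (a b : ι) :
    Complex.normSq (L a b) ≤ (L a a).re * (L b b).re :=
  le_of_tendsto_of_tendsto' ((Complex.continuous_normSq.tendsto _).comp (hL a b))
    (((Complex.continuous_re.tendsto _).comp (hL a a)).mul
      ((Complex.continuous_re.tendsto _).comp (hL b b)))
    fun k => (hA k).normSq_apply_le a b

section Amplitudes
open Real
variable {nbar n : ℕ} {θ₂ : ℝ}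

theorem kraus_amplitudes_sq_add (x y : ℝ) :
    (cos (y / 2) ^ 2 * sin x) ^ 2 + (cos (x / 2) ^ 2 * cos y - sin (x / 2) ^ 2) ^ 2
      + (sin y * cos (x / 2)) ^ 2 = 1 := by
  obtain ⟨a, rfl⟩ : ∃ a, x = 2 * a := ⟨x / 2, by ring⟩
  obtain ⟨b, rfl⟩ : ∃ b, y = 2 * b := ⟨y / 2, by ring⟩
  simp only [mul_div_cancel_left₀ _ (two_ne_zero' ℝ), sin_two_mul, cos_two_mul]
  have ha := sin_sq_add_cos_sq a
  have hb := sin_sq_add_cos_sq b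
  linear_combination (4 * cos b ^ 4 * cos a ^ 2
      - (2 * cos a ^ 2 * (2 * cos b ^ 2 - 1) - sin a ^ 2 + cos a ^ 2 - 1)) * ha
    + 4 * cos b ^ 2 * cos a ^ 2 * hb

theorem alphaAng_of_sq_eq {t : ℝ} (ht : 0 ≤ t)
    (h : (n : ℝ) + 1 = t ^ 2 * ((nbar : ℝ) + 1)) : alphaAng nbar n = π * t := by
  rw [alphaAng, h, mul_div_cancel_right₀ _ (by positivity), sqrt_sq ht]

theorem sq_eq_of_alphaAng_eq {t : ℝ} (h : alphaAng nbar n = π * t) :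
    (n : ℝ) + 1 = t ^ 2 * ((nbar : ℝ) + 1) := by
  rw [alphaAng, mul_right_inj' Real.pi_ne_zero] at h
  rw [← h, sq_sqrt (by positivity), div_mul_cancel₀ _ (by positivity)]

theorem sin_alphaAng_eq_zero_iff (hn : n < 9 * nbar + 8) :
    sin (alphaAng nbar n) = 0 ↔ n = nbar ∨ n = 4 * nbar + 3 := by
  constructor
  · rw [Real.sin_eq_zero_iff]
    rintro ⟨k, hk⟩
    have hsq : ((n : ℤ) + 1) = k ^ 2 * ((nbar : ℤ) + 1) := by
      exact_mod_cast sq_eq_of_alphaAng_eq (t := k) (by rw [← hk, mul_comm])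
    have hn' : (n : ℤ) < 9 * nbar + 8 := by exact_mod_cast hn
    obtain ⟨hlo, hhi⟩ := abs_lt.1 (abs_lt_of_sq_lt_sq (by nlinarith : k ^ 2 < 3 ^ 2) zero_le_three)
    interval_cases k <;> norm_num at hsq <;> omega
  · rintro (rfl | rfl)
    · rw [alphaAng_of_sq_eq zero_le_one (by ring), mul_one, sin_pi]
    · rw [alphaAng_of_sq_eq zero_le_two (by push_cast; ring), mul_comm, sin_two_pi]

theorem cos_half_alphaAng_eq_zero_iff (hn : n ≤ 9 * nbar + 8) :
    cos (alphaAng nbar n / 2) = 0 ↔ n = nbar ∨ n = 9 * nbar + 8 := by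
  rw [Real.cos_eq_zero_iff]
  constructor
  · rintro ⟨k, hk⟩
    have hsq : ((n : ℤ) + 1) = (2 * k + 1) ^ 2 * ((nbar : ℤ) + 1) := by
      exact_mod_cast sq_eq_of_alphaAng_eq (t := 2 * k + 1) (by linarith)
    have hn' : (n : ℤ) ≤ 9 * nbar + 8 := by exact_mod_cast hn
    have hk3 := abs_le.1 (abs_le_of_sq_le_sq (by nlinarith : (2 * k + 1) ^ 2 ≤ 3 ^ 2) zero_le_three)
    obtain ⟨hlo, hhi⟩ : -2 ≤ k ∧ k ≤ 1 := by omega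
    interval_cases k <;> norm_num at hsq <;> omega
  · rintro (rfl | rfl)
    · exact ⟨0, by rw [alphaAng_of_sq_eq zero_le_one (by ring)]; ring⟩
    · exact ⟨1, by rw [alphaAng_of_sq_eq zero_le_three (by push_cast; ring)]; ring⟩

theorem sin_betaAng_ne_zero (hθ : ∀ k : ℤ, θ₂ * sqrt n ≠ k * π) :
    sin (betaAng θ₂ n) ≠ 0 := by
  rw [Ne, Real.sin_eq_zero_iff, not_exists]
  intro k hk
  exact hθ (2 * k) (by rw [betaAng] at hk; push_cast; linarith)

theorem cos_half_betaAng_ne_zero (hθ : ∀ k : ℤ, θ₂ * sqrt n ≠ k * π) :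
    cos (betaAng θ₂ n / 2) ≠ 0 := by
  rw [Ne, Real.cos_eq_zero_iff, not_exists]
  intro k hk
  exact hθ (2 * (2 * k + 1)) (by rw [betaAng] at hk; push_cast; linarith)

def upAmp (nbar : ℕ) (θ₂ : ℝ) (n : ℕ) : ℝ :=
  cos (betaAng θ₂ n / 2) ^ 2 * sin (alphaAng nbar n)

def stayAmp (nbar : ℕ) (θ₂ : ℝ) (n : ℕ) : ℝ :=
  cos (alphaAng nbar n / 2) ^ 2 * cos (betaAng θ₂ n) - sin (alphaAng nbar n / 2) ^ 2

def downAmp (nbar : ℕ) (θ₂ : ℝ) (n : ℕ) : ℝ :=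
  sin (betaAng θ₂ n) * cos (alphaAng nbar n / 2)

theorem upAmp_sq_add_stayAmp_sq_add_downAmp_sq :
    upAmp nbar θ₂ n ^ 2 + stayAmp nbar θ₂ n ^ 2 + downAmp nbar θ₂ n ^ 2 = 1 :=
  kraus_amplitudes_sq_add _ _

theorem upAmp_eq_zero (hn : n = nbar ∨ n = 4 * nbar + 3) : upAmp nbar θ₂ n = 0 := by
  rw [upAmp, (sin_alphaAng_eq_zero_iff (by omega)).2 hn, mul_zero]

theorem downAmp_eq_zero (hn : n = nbar ∨ n = 9 * nbar + 8) : downAmp nbar θ₂ n = 0 := by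
  rw [downAmp, (cos_half_alphaAng_eq_zero_iff (by omega)).2 hn, mul_zero]

theorem upAmp_ne_zero (hθ : 1 ≤ n → ∀ k : ℤ, θ₂ * sqrt n ≠ k * π)
    (hn : n < 9 * nbar + 8) (hn₁ : n ≠ nbar) (hn₂ : n ≠ 4 * nbar + 3) : upAmp nbar θ₂ n ≠ 0 := by
  refine mul_ne_zero (pow_ne_zero 2 ?_) ((sin_alphaAng_eq_zero_iff hn).not.2 (by tauto))
  obtain rfl | hn₀ := Nat.eq_zero_or_pos n
  · simp [betaAng]
  · exact cos_half_betaAng_ne_zero (hθ hn₀)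

theorem downAmp_ne_zero (hθ : ∀ k : ℤ, θ₂ * sqrt n ≠ k * π)
    (hn : n < 9 * nbar + 8) (hn₁ : n ≠ nbar) : downAmp nbar θ₂ n ≠ 0 :=
  mul_ne_zero (sin_betaAng_ne_zero hθ) ((cos_half_alphaAng_eq_zero_iff hn.le).not.2 (by omega))

end Amplitudes

def transfer9 (nbar : ℕ) (θ₂ : ℝ) : Matrix (Fin (9*nbar+9)) (Fin (9*nbar+9)) ℝ :=
  fun i j => Complex.normSq (Mg9 nbar θ₂ i j) + Complex.normSq (Me9 nbar θ₂ i j)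
    + Complex.normSq (Mm9 nbar θ₂ i j)

section Transfer
variable {nbar : ℕ} {θ₂ : ℝ}

theorem transfer9_apply (i j : Fin (9*nbar+9)) :
    transfer9 nbar θ₂ i j = (if (i : ℕ) = j + 1 then upAmp nbar θ₂ j ^ 2 else 0)
      + (if i = j then stayAmp nbar θ₂ j ^ 2 else 0)
      + (if (i : ℕ) + 1 = j then downAmp nbar θ₂ j ^ 2 else 0) := by
  simp only [transfer9, Mg9, Me9, Mm9, apply_ite Complex.normSq, Complex.normSq_ofReal, map_zero,
    upAmp, stayAmp, downAmp, sq]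

theorem transfer9_nonneg (i j : Fin (9*nbar+9)) : 0 ≤ transfer9 nbar θ₂ i j := by
  unfold transfer9
  exact add_nonneg (add_nonneg (Complex.normSq_nonneg _) (Complex.normSq_nonneg _))
    (Complex.normSq_nonneg _)

theorem sum_transfer9_le_one (j : Fin (9*nbar+9)) : ∑ i, transfer9 nbar θ₂ i j ≤ 1 := by
  simp only [transfer9_apply, Finset.sum_add_distrib]
  have hup : ∑ i : Fin (9*nbar+9), (if (i : ℕ) = j + 1 then upAmp nbar θ₂ j ^ 2 else 0)
      ≤ upAmp nbar θ₂ j ^ 2 :=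
    sum_ite_le_of_subsingleton (fun i _ i' _ hi hi' => Fin.ext (hi.trans hi'.symm)) (sq_nonneg _)
  have hdown : ∑ i : Fin (9*nbar+9), (if (i : ℕ) + 1 = j then downAmp nbar θ₂ j ^ 2 else 0)
      ≤ downAmp nbar θ₂ j ^ 2 :=
    sum_ite_le_of_subsingleton (fun i _ i' _ hi hi' => Fin.ext (by omega)) (sq_nonneg _)
  rw [sum_ite_eq' univ j, if_pos (mem_univ _)]
  linarith [upAmp_sq_add_stayAmp_sq_add_downAmp_sq (nbar := nbar) (θ₂ := θ₂) (n := j)]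

theorem transfer9_ne_zero {i j : Fin (9*nbar+9)} (h : transfer9 nbar θ₂ i j ≠ 0) :
    ((i : ℕ) = j + 1 ∧ upAmp nbar θ₂ j ≠ 0) ∨ i = j ∨
      ((i : ℕ) + 1 = j ∧ downAmp nbar θ₂ j ≠ 0) := by
  rw [transfer9_apply] at h
  by_contra hc
  push Not at hc
  obtain ⟨hup, hstay, hdown⟩ := hc
  apply h
  split_ifs with h₁ h₂ h₃ <;> simp_all

theorem Phi9_apply_self (ρ : Matrix (Fin (9*nbar+9)) (Fin (9*nbar+9)) ℂ) (i : Fin (9*nbar+9)) :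
    Phi9 nbar θ₂ ρ i i = ∑ j, (transfer9 nbar θ₂ i j : ℂ) * ρ j j := by
  have hg : ∀ j, Mg9 nbar θ₂ i j ≠ 0 → (i : ℕ) = j + 1 := fun j h => by
    by_contra hc; exact h (if_neg hc)
  have he : ∀ j, Me9 nbar θ₂ i j ≠ 0 → i = j := fun j h => by
    by_contra hc; exact h (if_neg hc)
  have hm : ∀ j, Mm9 nbar θ₂ i j ≠ 0 → (i : ℕ) + 1 = j := fun j h => by
    by_contra hc; exact h (if_neg hc)
  rw [Phi9, Matrix.add_apply, Matrix.add_apply,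
    mul_mul_conjTranspose_apply_self _ _ _ fun j k hj hk =>
      Fin.ext (Nat.add_right_cancel ((hg j hj).symm.trans (hg k hk))),
    mul_mul_conjTranspose_apply_self _ _ _ fun j k hj hk => (he j hj).symm.trans (he k hk),
    mul_mul_conjTranspose_apply_self _ _ _ fun j k hj hk =>
      Fin.ext ((hm j hj).symm.trans (hm k hk)),
    ← sum_add_distrib, ← sum_add_distrib]
  refine sum_congr rfl fun j _ => ?_
  simp only [transfer9]
  push_cast
  ring

theorem Phi9_diag_re (ρ : Matrix (Fin (9*nbar+9)) (Fin (9*nbar+9)) ℂ) :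
    (fun i => (Phi9 nbar θ₂ ρ i i).re) = transfer9 nbar θ₂ *ᵥ fun i => (ρ i i).re := by
  ext i
  simp [Phi9_apply_self, mulVec, dotProduct, Complex.re_sum]

theorem sq_upAmp_le_transfer9 {i j : Fin (9*nbar+9)} (h : (i : ℕ) = j + 1) :
    upAmp nbar θ₂ j ^ 2 ≤ transfer9 nbar θ₂ i j := by
  rw [transfer9_apply, if_pos h]
  have : (0 : ℝ) ≤ if i = j then stayAmp nbar θ₂ j ^ 2 else 0 := by split_ifs <;> positivity
  have : (0 : ℝ) ≤ if (i : ℕ) + 1 = j then downAmp nbar θ₂ j ^ 2 else 0 := by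
    split_ifs <;> positivity
  linarith

theorem sq_downAmp_le_transfer9 {i j : Fin (9*nbar+9)} (h : (i : ℕ) + 1 = j) :
    downAmp nbar θ₂ j ^ 2 ≤ transfer9 nbar θ₂ i j := by
  rw [transfer9_apply, if_pos h]
  have : (0 : ℝ) ≤ if (i : ℕ) = j + 1 then upAmp nbar θ₂ j ^ 2 else 0 := by
    split_ifs <;> positivity
  have : (0 : ℝ) ≤ if i = j then stayAmp nbar θ₂ j ^ 2 else 0 := by split_ifs <;> positivity
  linarith

end Transfer

def absorptionRank (nbar n : ℕ) : ℕ :=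
  if n ≤ nbar then nbar - n else if n ≤ 4 * nbar + 3 then n - nbar else 9 * nbar + 8 - n

theorem absorptionRank_eq_zero_iff {nbar n : ℕ} (hn : n ≤ 9 * nbar + 8) :
    absorptionRank nbar n = 0 ↔ n = nbar ∨ n = 9 * nbar + 8 := by
  unfold absorptionRank; split_ifs <;> omega

theorem isDescentRank_transfer9 {nbar : ℕ} {θ₂ : ℝ}
    (hθ : ∀ (n : ℕ) (k : ℤ), 1 ≤ n → n ≤ 9*nbar+8 → θ₂ * Real.sqrt (n : ℝ) ≠ (k : ℝ) * Real.pi) :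
    (transfer9 nbar θ₂).IsDescentRank fun i => absorptionRank nbar i := by
  have hstep : ∀ i j, transfer9 nbar θ₂ i j ≠ 0 → absorptionRank nbar i ≤ absorptionRank nbar j + 1
      ∧ (absorptionRank nbar j = 0 → absorptionRank nbar i = 0) := by
    intro i j h
    have := i.isLt; have := j.isLt
    rcases transfer9_ne_zero h with ⟨hij, hup⟩ | rfl | ⟨hij, hdown⟩
    · have h₁ : (j : ℕ) ≠ nbar := fun hj => hup (upAmp_eq_zero (.inl hj))
      have h₂ : (j : ℕ) ≠ 4 * nbar + 3 := fun hj => hup (upAmp_eq_zero (.inr hj))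
      unfold absorptionRank; split_ifs <;> omega
    · omega
    · have h₁ : (j : ℕ) ≠ nbar := fun hj => hdown (downAmp_eq_zero (.inl hj))
      have h₂ : (j : ℕ) ≠ 9 * nbar + 8 := fun hj => hdown (downAmp_eq_zero (.inr hj))
      unfold absorptionRank; split_ifs <;> omega
  refine ⟨fun i j h => (hstep i j h).1, fun i j h => (hstep i j h).2, fun j hj => ?_⟩
  have hjN := j.isLt
  have hj' := (absorptionRank_eq_zero_iff (nbar := nbar) (n := j) (by omega)).not.1 hj
  by_cases hB : nbar < j ∧ (j : ℕ) ≤ 4 * nbar + 3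
  · refine ⟨⟨j - 1, by omega⟩, by simp only [absorptionRank]; split_ifs <;> omega, ?_⟩
    refine (sq_pos_of_ne_zero ?_).trans_le (sq_downAmp_le_transfer9 (by simp; omega))
    exact downAmp_ne_zero (hθ j · (by omega) (by omega)) (by omega) (by omega)
  · refine ⟨⟨j + 1, by omega⟩, by simp only [absorptionRank]; split_ifs <;> omega, ?_⟩
    refine (sq_pos_of_ne_zero ?_).trans_le (sq_upAmp_le_transfer9 rfl)
    exact upAmp_ne_zero (fun h₁ k => hθ j k h₁ (by omega)) (by omega) (by omega) (by omega)

theorem Phi9_posSemidef {nbar : ℕ} {θ₂ : ℝ} {ρ : Matrix (Fin (9*nbar+9)) (Fin (9*nbar+9)) ℂ}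
    (hρ : ρ.PosSemidef) : (Phi9 nbar θ₂ ρ).PosSemidef :=
  ((hρ.mul_mul_conjTranspose_same _).add (hρ.mul_mul_conjTranspose_same _)).add
    (hρ.mul_mul_conjTranspose_same _)

theorem lasalle_accumulation_general (nbar : ℕ) (θ₂ : ℝ)
    (hθ : ∀ (n : ℕ) (k : ℤ), 1 ≤ n → n ≤ 9*nbar+8 → θ₂ * Real.sqrt (n : ℝ) ≠ (k : ℝ) * Real.pi)
    (ρ₀ : Matrix (Fin (9*nbar+9)) (Fin (9*nbar+9)) ℂ)
    (hpsd : ρ₀.PosSemidef)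
    (ρinf : Matrix (Fin (9*nbar+9)) (Fin (9*nbar+9)) ℂ)
    (φ : ℕ → ℕ) (hφ : StrictMono φ)
    (hconv : ∀ a b : Fin (9*nbar+9),
      Filter.Tendsto (fun k => (Phi9 nbar θ₂)^[φ k] ρ₀ a b) Filter.atTop (nhds (ρinf a b))) :
    ∀ a b : Fin (9*nbar+9),
      ¬(((a : ℕ) = nbar ∨ (a : ℕ) = 9*nbar+8) ∧ ((b : ℕ) = nbar ∨ (b : ℕ) = 9*nbar+8)) →
      ρinf a b = 0 := by
  have hρ : ∀ k, ((Phi9 nbar θ₂)^[k] ρ₀).PosSemidef :=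
    Function.Iterate.rec _ hpsd (fun _ => Phi9_posSemidef)
  have hdiag : ∀ a : Fin (9*nbar+9), absorptionRank nbar a ≠ 0 → (ρinf a a).re = 0 := by
    intro a ha
    refine tendsto_nhds_unique ((Complex.continuous_re.tendsto _).comp (hconv a a)) ?_
    refine ((isDescentRank_transfer9 hθ).tendsto_zero transfer9_nonneg sum_transfer9_le_one
      (q := fun k i => ((Phi9 nbar θ₂)^[k] ρ₀ i i).re)
      (fun i => (Complex.nonneg_iff.1 hpsd.diag_nonneg).1)
      (fun k => by simp only [Function.iterate_succ_apply', Phi9_diag_re]) ha).comp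
      hφ.tendsto_atTop
  intro a b hab
  have htransient : absorptionRank nbar a ≠ 0 ∨ absorptionRank nbar b ≠ 0 := by
    rw [Ne, Ne, absorptionRank_eq_zero_iff (by omega), absorptionRank_eq_zero_iff (by omega)]
    tauto
  have hprod : (ρinf a a).re * (ρinf b b).re = 0 := by
    rcases htransient with h | h <;> simp [hdiag _ h]
  have hle := PosSemidef.normSq_apply_le_of_tendsto (fun k => hρ (φ k)) hconv a b
  exact Complex.normSq_eq_zero.1 (le_antisymm (hprod ▸ hle) (Complex.normSq_nonneg _))

/-- LaSalle remark: if θ₂·√n is never an integer multiple of π for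
1 ≤ n ≤ 9n̄+8, then every entrywise accumulation point of the iterates of the Kraus map
starting from a density matrix is supported on the span of |n̄⟩ and |9n̄+8⟩. -/
theorem lasalle_accumulation (nbar : ℕ) (θ₂ : ℝ)
    (hθ : ∀ (n : ℕ) (k : ℤ), 1 ≤ n → n ≤ 9*nbar+8 → θ₂ * Real.sqrt (n : ℝ) ≠ (k : ℝ) * Real.pi)
    (ρ₀ : Matrix (Fin (9*nbar+9)) (Fin (9*nbar+9)) ℂ)
    (hpsd : ρ₀.PosSemidef) (htr : ρ₀.trace = 1)
    (ρinf : Matrix (Fin (9*nbar+9)) (Fin (9*nbar+9)) ℂ)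
    (φ : ℕ → ℕ) (hφ : StrictMono φ)
    (hconv : ∀ a b : Fin (9*nbar+9),
      Filter.Tendsto (fun k => (Phi9 nbar θ₂)^[φ k] ρ₀ a b) Filter.atTop (nhds (ρinf a b))) :
    ∀ a b : Fin (9*nbar+9),
      ¬(((a : ℕ) = nbar ∨ (a : ℕ) = 9*nbar+8) ∧ ((b : ℕ) = nbar ∨ (b : ℕ) = 9*nbar+8)) →
      ρinf a b = 0 :=
  lasalle_accumulation_general nbar θ₂ hθ ρ₀ hpsd ρinf φ hφ hconv
end
end
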